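/- Let G be a finite non-nilpotent group such that nil(G) has even order. Then the nilpotent graph of G is non-Eulerian; more precisely, every vertex x ∈ G \ nil(G) has odd degree. -/

import Mathlib

/-!
Inversion is an involution of `nil(G)` fixing `1`, so if `|nil(G)|` is even it has another fixed
point: an involution `t ∈ nil(G)`. Such a `t` is hypercentral. Being in `nil(G)`, it commutes with
every element of odd order (elements of coprime orders commute in a nilpotent group), so it
centralizes the subgroup `K` generated by them; `G/K` is a `2`-group, so `C_G(K)` is nilpotent and
its Sylow `2`-subgroup `S ∋ t` is a normal `2`-subgroup of `G` on which `G` acts through `G/K`.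
In the `2`-group `S ⋊ G/K` the upper central series exhausts `S`, and it maps into that of `G`.

Multiplying `g` by a hypercentral element keeps `⟨g, x⟩` nilpotent, so `g ↦ t g` is a
fixed-point-free involution of `nil_G(x) \ nil(G)`, which therefore has even size. The neighbours
of `x` are this set minus `x`, hence odd in number.
-/

def nilpotentizer (G : Type*) [Group G] : Set G :=
  {g | ∀ h : G, Group.IsNilpotent (Subgroup.closure ({g, h} : Set G))}

def nilpotentizerOf {G : Type*} [Group G] (x : G) : Set G :=
  {g | Group.IsNilpotent (Subgroup.closure ({g, x} : Set G))}

def nilpotentGraph (G : Type*) [Group G] :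
    SimpleGraph {x : G // x ∉ nilpotentizer G} where
  Adj a b := a ≠ b ∧ Group.IsNilpotent (Subgroup.closure ({(a : G), (b : G)} : Set G))
  symm := ⟨fun a b ⟨hne, h⟩ => ⟨fun e => hne e.symm, by rwa [Set.pair_comm]⟩⟩
  loopless := ⟨fun a ⟨h, _⟩ => h rfl⟩

noncomputable def hypercenter (G : Type*) [Group G] : Subgroup G := Subgroup.upperCentralSeries G (Nat.card G)

instance {G : Type*} [Group G] : (hypercenter G).Normal := by
  unfold hypercenter; infer_instance

open Subgroup Group
open scoped commutatorElement IsMulCommutative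

theorem commutatorElement_pow_left_of_mem_center {G : Type*} [Group G] {x y : G}
    (h : ⁅x, y⁆ ∈ center G) (n : ℕ) : ⁅x ^ n, y⁆ = ⁅x, y⁆ ^ n := by
  induction n with
  | zero => simp
  | succ n ih =>
    have hconj : x * ⁅x, y⁆ ^ n * x⁻¹ = ⁅x, y⁆ ^ n := by
      rw [mem_center_iff.mp (pow_mem h n) x, mul_inv_cancel_right]
    calc ⁅x ^ (n + 1), y⁆ = x * ⁅x ^ n, y⁆ * x⁻¹ * ⁅x, y⁆ := by
          simp only [commutatorElement_def, pow_succ', mul_inv_rev]; group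
      _ = ⁅x, y⁆ ^ (n + 1) := by rw [ih, hconj, pow_succ]

theorem Commute.of_isNilpotent_of_coprime_orderOf {G : Type*} [Group G] [IsNilpotent G] {x y : G}
    (h : (orderOf x).Coprime (orderOf y)) : Commute x y := by
  refine Group.nilpotent_center_quotient_ind
    (P := fun G _ _ => ∀ x y : G, (orderOf x).Coprime (orderOf y) → Commute x y) G
    (fun G _ _ x y _ => Subsingleton.elim _ _) (fun G _ _ ih x y h => ?_) x y h
  let π := QuotientGroup.mk' (center G)
  have hc : ⁅x, y⁆ ∈ center G := by
    rw [← QuotientGroup.eq_one_iff, ← QuotientGroup.mk'_apply, map_commutatorElement,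
      commutatorElement_eq_one_iff_commute]
    exact ih _ _ (h.of_dvd (orderOf_map_dvd π x) (orderOf_map_dvd π y))
  have hx : ⁅x, y⁆ ^ orderOf x = 1 := by
    rw [← commutatorElement_pow_left_of_mem_center hc, pow_orderOf_eq_one,
      commutatorElement_one_left]
  have hy : ⁅x, y⁆⁻¹ ^ orderOf y = 1 := by
    have hc' : ⁅y, x⁆ ∈ center G := commutatorElement_inv x y ▸ inv_mem hc
    rw [commutatorElement_inv, ← commutatorElement_pow_left_of_mem_center hc', pow_orderOf_eq_one,
      commutatorElement_one_left]
  have hdvd : orderOf ⁅x, y⁆ ∣ 1 := by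
    rw [← h.gcd_eq_one]
    exact Nat.dvd_gcd (orderOf_dvd_of_pow_eq_one hx)
      (orderOf_inv ⁅x, y⁆ ▸ orderOf_dvd_of_pow_eq_one hy)
  exact commutatorElement_eq_one_iff_commute.mp (orderOf_eq_one_iff.mp (Nat.dvd_one.mp hdvd))

namespace Subgroup

variable {G : Type*} [Group G]

theorem isNilpotent_of_le {A B : Subgroup G} (hAB : A ≤ B) [IsNilpotent B] : IsNilpotent A := by
  obtain ⟨n, hn⟩ := (isNilpotent_iff_lowerCentralSeries B).mp ‹_›
  exact isNilpotent_of_lowerCentralSeries_eq_bot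
    (le_bot_iff.mp ((lowerCentralSeries_mono n hAB).trans_eq hn))

theorem lowerCentralSeries_add_eq_bot {S : Subgroup G} {k m : ℕ}
    (h : S.lowerCentralSeries k ≤ upperCentralSeries G m) :
    S.lowerCentralSeries (k + m) = ⊥ := by
  induction m generalizing k with
  | zero => exact le_bot_iff.mp h
  | succ m ih =>
    rw [← add_assoc, add_right_comm]
    exact ih ((commutator_mono h le_top).trans (commutator_upperCentralSeries_top_le G m))

theorem isNilpotent_sup_upperCentralSeries (A : Subgroup G) [IsNilpotent A] (n : ℕ) :
    IsNilpotent ↥(A ⊔ upperCentralSeries G n) := by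
  set Z := upperCentralSeries G n
  obtain ⟨k, hk⟩ := (isNilpotent_iff_lowerCentralSeries A).mp ‹_›
  have hle : (A ⊔ Z).lowerCentralSeries k ≤ Z := by
    rw [← QuotientGroup.ker_mk' Z, ← map_eq_bot_iff, map_lowerCentralSeries, map_sup,
      QuotientGroup.ker_mk', QuotientGroup.map_mk'_self, sup_bot_eq, ← map_lowerCentralSeries, hk,
      map_bot]
  exact isNilpotent_of_lowerCentralSeries_eq_bot (lowerCentralSeries_add_eq_bot hle)

theorem isNilpotent_centralizer_of_isNilpotent_quotient (K : Subgroup G) [K.Normal]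
    [IsNilpotent (G ⧸ K)] : IsNilpotent (centralizer (K : Set G)) := by
  let f := (QuotientGroup.mk' K).comp (centralizer (K : Set G)).subtype
  refine isNilpotent_of_ker_le_center f.rangeRestrict fun c hc => ?_
  rw [MonoidHom.ker_rangeRestrict, MonoidHom.mem_ker, MonoidHom.comp_apply,
    QuotientGroup.mk'_apply, QuotientGroup.eq_one_iff] at hc
  exact mem_center_iff.mpr fun d => Subtype.ext (mem_centralizer_iff.mp d.2 c hc).symm

end Subgroup

theorem Set.ncard_modEq_ncard_fixed_of_involution {α : Type*} {s : Set α} (hs : s.Finite)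
    {f : α → α} (hf : Set.MapsTo f s s) (hinv : ∀ a ∈ s, f (f a) = a) :
    s.ncard ≡ {a ∈ s | f a = a}.ncard [MOD 2] := by
  classical
  have := hs.fintype
  let F : Function.End s := hf.restrict f s s
  have hF : F ^ 2 ^ 1 = 1 := funext fun a => Subtype.ext (hinv a a.2)
  have hfix : {a ∈ s | f a = a} = Subtype.val '' Function.fixedPoints F := by
    ext a
    simp [F, Function.IsFixedPt, Subtype.ext_iff, Set.MapsTo.restrict, Subtype.map, and_comm]
  rw [hfix, Set.ncard_image_of_injective _ Subtype.val_injective, Set.ncard_eq_toFinset_card',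
    Set.ncard_eq_toFinset_card', Set.toFinset_card, Set.toFinset_card]
  simpa using Equiv.Perm.card_fixedPoints_modEq hF

theorem SemidirectProduct.commutatorElement_inl_inr {N H : Type*} [Group N] [Group H]
    {φ : H →* MulAut N} (n : N) (h : H) :
    ⁅(inl n : N ⋊[φ] H), (inr h : N ⋊[φ] H)⁆ = inl (n * φ h n⁻¹) := by
  rw [map_mul, inl_aut, commutatorElement_def, map_inv, map_inv]
  group

def pPrimeClosure (p : ℕ) (G : Type*) [Group G] : Subgroup G :=
  normalClosure {g : G | p.Coprime (orderOf g)}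

instance (p : ℕ) (G : Type*) [Group G] : (pPrimeClosure p G).Normal :=
  normalClosure_normal

section Hypercentral

variable {G : Type*} [Group G]

theorem mem_centralizer_pPrimeClosure {p : ℕ} {t : G}
    (ht : ∀ y : G, p.Coprime (orderOf y) → Commute t y) :
    t ∈ centralizer (pPrimeClosure p G : Set G) := by
  rw [pPrimeClosure, normalClosure, centralizer_closure, mem_centralizer_iff]
  intro c hc
  obtain ⟨a, ha, hac⟩ := Group.mem_conjugatesOfSet_iff.mp hc
  obtain ⟨g, rfl⟩ := isConj_iff.mp hac
  refine (ht _ ?_).symm.eq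
  rwa [← MulAut.conj_apply, MulEquiv.orderOf_eq]

theorem isPGroup_quotient_pPrimeClosure [Finite G] (p : ℕ) [hp : Fact p.Prime] :
    IsPGroup p (G ⧸ pPrimeClosure p G) := by
  intro q
  obtain ⟨g, rfl⟩ := QuotientGroup.mk_surjective q
  have hg : orderOf g ≠ 0 := (orderOf_pos g).ne'
  refine ⟨(orderOf g).factorization p, ?_⟩
  rw [← QuotientGroup.mk_pow, QuotientGroup.eq_one_iff]
  refine subset_normalClosure ?_
  show p.Coprime (orderOf _)
  rw [orderOf_pow_of_dvd (pow_ne_zero _ hp.out.ne_zero) (Nat.ordProj_dvd _ _)]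
  exact Nat.coprime_ordCompl hp.out hg

theorem coe_mem_upperCentralSeries_of_inl_mem {S : Subgroup G} [S.Normal] {Q : Type*} [Group Q]
    {φ : Q →* MulAut S} (π : G →* Q) (hφ : ∀ g, φ (π g) = MulAut.conjNormal g) {i : ℕ} {s : S}
    (hs : SemidirectProduct.inl s ∈ Subgroup.upperCentralSeries (S ⋊[φ] Q) i) :
    (s : G) ∈ Subgroup.upperCentralSeries G i := by
  induction i generalizing s with
  | zero =>
    rw [Subgroup.upperCentralSeries_zero, mem_bot, ← map_one SemidirectProduct.inl] at hs
    simp [SemidirectProduct.inl_injective hs]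
  | succ i ih =>
    intro g
    have h := Subgroup.mem_upperCentralSeries_succ_iff.mp hs (SemidirectProduct.inr (π g))
    rw [SemidirectProduct.commutatorElement_inl_inr] at h
    have hcoe : ((s * φ (π g) s⁻¹ : S) : G) = ⁅(s : G), g⁆ := by
      rw [coe_mul, hφ, MulAut.conjNormal_apply, commutatorElement_def, InvMemClass.coe_inv]
      group
    exact hcoe ▸ ih h

theorem exists_le_upperCentralSeries_of_isPGroup_quotient [Finite G] {p : ℕ} [Fact p.Prime]
    (S : Subgroup G) [S.Normal] (hS : IsPGroup p S) (K : Subgroup G) [K.Normal]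
    (hKS : K ≤ centralizer (S : Set G)) (hK : IsPGroup p (G ⧸ K)) :
    ∃ n, S ≤ Subgroup.upperCentralSeries G n := by
  let φ : G ⧸ K →* MulAut S := QuotientGroup.lift K MulAut.conjNormal fun k hk => by
    ext s
    rw [MulAut.conjNormal_apply, ← mem_centralizer_iff.mp (hKS hk) s s.2, mul_inv_cancel_right]
    rfl
  have : Finite (S ⋊[φ] (G ⧸ K)) := Finite.of_equiv _ SemidirectProduct.equivProd.symm
  have hW : IsPGroup p (S ⋊[φ] (G ⧸ K)) := by
    obtain ⟨a, ha⟩ := IsPGroup.iff_card.mp hS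
    obtain ⟨b, hb⟩ := IsPGroup.iff_card.mp hK
    exact IsPGroup.of_card (n := a + b) (by rw [SemidirectProduct.card, ha, hb, pow_add])
  obtain ⟨n, hn⟩ := hW.isNilpotent
  exact ⟨n, fun s hs => coe_mem_upperCentralSeries_of_inl_mem (s := ⟨s, hs⟩) (QuotientGroup.mk' K)
    (fun g => QuotientGroup.lift_mk _ _ _) (hn ▸ mem_top _)⟩

theorem Commute.of_mem_nilpotentizerOf {t y : G} (ht : t ∈ nilpotentizerOf y)
    (h : (orderOf t).Coprime (orderOf y)) : Commute t y := by
  have : IsNilpotent (closure {t, y}) := ht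
  have hcomm := Commute.of_isNilpotent_of_coprime_orderOf
    (x := (⟨t, subset_closure (by simp)⟩ : closure ({t, y} : Set G)))
    (y := ⟨y, subset_closure (by simp)⟩) (by simpa only [orderOf_mk] using h)
  exact congrArg Subtype.val hcomm

theorem exists_mem_upperCentralSeries_of_mem_nilpotentizer [Finite G] {p k : ℕ} [Fact p.Prime]
    {t : G} (ht : t ∈ nilpotentizer G) (htp : orderOf t = p ^ k) :
    ∃ n, t ∈ Subgroup.upperCentralSeries G n := by
  let K := pPrimeClosure p G
  let C := centralizer (K : Set G)
  have htC : t ∈ C := mem_centralizer_pPrimeClosure fun y hy =>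
    Commute.of_mem_nilpotentizerOf (ht y) (htp ▸ hy.pow_left k)
  have hK : IsPGroup p (G ⧸ K) := isPGroup_quotient_pPrimeClosure p
  have := hK.isNilpotent
  have := isNilpotent_centralizer_of_isNilpotent_quotient K
  let P : Sylow p C := default
  have := P.characteristic_of_normal inferInstance
  let S := (P : Subgroup C).map C.subtype
  have htS : t ∈ S := by
    have hzp : IsPGroup p (zpowers (⟨t, htC⟩ : C)) :=
      IsPGroup.of_card (by rw [Nat.card_zpowers, orderOf_mk, htp])
    obtain ⟨Q, hQ⟩ := hzp.exists_le_sylow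
    have := Sylow.unique_of_normal P inferInstance
    exact ⟨⟨t, htC⟩, Subsingleton.elim Q P ▸ hQ (mem_zpowers _), rfl⟩
  have hKS : K ≤ centralizer (S : Set G) := by
    rw [le_centralizer_iff]
    rintro _ ⟨c, -, rfl⟩
    exact c.2
  obtain ⟨n, hn⟩ := exists_le_upperCentralSeries_of_isPGroup_quotient S
    (P.isPGroup'.map C.subtype) K hKS hK
  exact ⟨n, hn htS⟩

end Hypercentral

section NilpotentGraph

variable {G : Type*} [Group G]

theorem mem_nilpotentizerOf_of_mem_zpowers {g x : G} (hg : g ∈ zpowers x) :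
    g ∈ nilpotentizerOf x :=
  Subgroup.isNilpotent_of_le (B := zpowers x) <| closure_le _ |>.mpr <| by
    rintro y (rfl | rfl)
    exacts [hg, mem_zpowers y]

theorem inv_mem_nilpotentizer {g : G} (hg : g ∈ nilpotentizer G) : g⁻¹ ∈ nilpotentizer G := by
  intro h
  have : IsNilpotent (closure {g, h}) := hg h
  refine Subgroup.isNilpotent_of_le (B := closure {g, h}) <| closure_le _ |>.mpr ?_
  rintro y (rfl | rfl)
  exacts [inv_mem (subset_closure (by simp)), subset_closure (by simp)]

theorem mul_mem_nilpotentizerOf {z g x : G} {n : ℕ} (hz : z ∈ Subgroup.upperCentralSeries G n)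
    (hg : g ∈ nilpotentizerOf x) : z * g ∈ nilpotentizerOf x := by
  have : IsNilpotent (closure {g, x}) := hg
  have := Subgroup.isNilpotent_sup_upperCentralSeries (closure {g, x}) n
  refine Subgroup.isNilpotent_of_le (B := closure {g, x} ⊔ Subgroup.upperCentralSeries G n)
    (closure_le _ |>.mpr ?_)
  rintro y (rfl | rfl)
  · exact mul_mem (mem_sup_right hz) (mem_sup_left (subset_closure (by simp)))
  · exact mem_sup_left (subset_closure (by simp))

theorem mul_mem_nilpotentizer {z g : G} {n : ℕ} (hz : z ∈ Subgroup.upperCentralSeries G n)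
    (hg : g ∈ nilpotentizer G) : z * g ∈ nilpotentizer G :=
  fun h => mul_mem_nilpotentizerOf hz (hg h)

variable [Finite G]

theorem exists_orderOf_eq_two_mem_nilpotentizer (h : Even (nilpotentizer G).ncard) :
    ∃ t ∈ nilpotentizer G, orderOf t = 2 := by
  have hmod := Set.ncard_modEq_ncard_fixed_of_involution (Set.toFinite _) (f := fun g : G => g⁻¹)
    (fun g hg => inv_mem_nilpotentizer hg) (fun g _ => inv_inv g)
  have hone : (1 : G) ∈ {g ∈ nilpotentizer G | g⁻¹ = g} :=
    ⟨fun _ => mem_nilpotentizerOf_of_mem_zpowers (one_mem _), inv_one⟩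
  have hpos := (Set.ncard_pos (Set.toFinite _)).mpr ⟨1, hone⟩
  rw [Nat.ModEq, Nat.even_iff.mp h] at hmod
  obtain ⟨t, ⟨ht, htinv⟩, ht1⟩ := Set.exists_ne_of_one_lt_ncard
    (s := {g ∈ nilpotentizer G | g⁻¹ = g}) (by omega) 1
  exact ⟨t, ht, orderOf_eq_prime (sq t ▸ inv_eq_iff_mul_eq_one.mp htinv) ht1⟩

theorem even_ncard_nilpotentizerOf_diff_nilpotentizer (h : Even (nilpotentizer G).ncard) (x : G) :
    Even (nilpotentizerOf x \ nilpotentizer G).ncard := by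
  obtain ⟨t, ht, ht2⟩ := exists_orderOf_eq_two_mem_nilpotentizer h
  obtain ⟨n, htn⟩ := exists_mem_upperCentralSeries_of_mem_nilpotentizer ht
    (ht2.trans (pow_one 2).symm)
  have htt : ∀ g, t * (t * g) = g := fun g => by
    rw [← mul_assoc, ← sq, ← ht2, pow_orderOf_eq_one, one_mul]
  have hmaps : Set.MapsTo (t * ·) (nilpotentizerOf x \ nilpotentizer G)
      (nilpotentizerOf x \ nilpotentizer G) := by
    rintro g ⟨hgx, hg⟩
    exact ⟨mul_mem_nilpotentizerOf htn hgx, fun htg => hg (htt g ▸ mul_mem_nilpotentizer htn htg)⟩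
  have hmod := Set.ncard_modEq_ncard_fixed_of_involution (Set.toFinite _) hmaps fun g _ => htt g
  have hfix : {g ∈ nilpotentizerOf x \ nilpotentizer G | t * g = g} = ∅ :=
    Set.eq_empty_of_forall_notMem fun g ⟨_, htg⟩ => by
      simp [mul_eq_right.mp htg] at ht2
  rw [hfix, Set.ncard_empty] at hmod
  exact Nat.even_iff.mpr hmod

theorem ncard_neighborSet_nilpotentGraph_add_one (x : {x : G // x ∉ nilpotentizer G}) :
    ((nilpotentGraph G).neighborSet x).ncard + 1 =
      (nilpotentizerOf (x : G) \ nilpotentizer G).ncard := by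
  have himg : Subtype.val '' (nilpotentGraph G).neighborSet x =
      (nilpotentizerOf (x : G) \ nilpotentizer G) \ {(x : G)} := by
    ext g
    constructor
    · rintro ⟨v, ⟨hne, hv⟩, rfl⟩
      exact ⟨⟨by rwa [Set.pair_comm] at hv, v.2⟩, fun h => hne (Subtype.ext h).symm⟩
    · rintro ⟨⟨hgx, hg⟩, hne⟩
      refine ⟨⟨g, hg⟩, ⟨fun h => hne (congrArg Subtype.val h).symm, ?_⟩, rfl⟩
      rwa [Set.pair_comm]
  have hx : (x : G) ∈ nilpotentizerOf (x : G) \ nilpotentizer G :=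
    ⟨mem_nilpotentizerOf_of_mem_zpowers (mem_zpowers _), x.2⟩
  rw [← Set.ncard_image_of_injective _ Subtype.val_injective, himg,
    Set.ncard_sdiff_singleton_add_one hx]

end NilpotentGraph

theorem nilpotentGraph_odd_degree_of_even_nilpotentizer_general {G : Type*} [Group G] [Finite G]
    (h2 : Even ((nilpotentizer G).ncard)) :
    ∀ x : {x : G // x ∉ nilpotentizer G},
      Odd (((nilpotentGraph G).neighborSet x).ncard) := by
  intro x
  have heven := even_ncard_nilpotentizerOf_diff_nilpotentizer h2 x
  rwa [← ncard_neighborSet_nilpotentGraph_add_one, Nat.even_add_one, Nat.not_even_iff_odd] at heven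

theorem nilpotentGraph_odd_degree_of_even_nilpotentizer {G : Type*} [Group G] [Finite G]
    (hG : ¬ Group.IsNilpotent G) (h2 : Even ((nilpotentizer G).ncard)) :
    ∀ x : {x : G // x ∉ nilpotentizer G},
      Odd (((nilpotentGraph G).neighborSet x).ncard) :=
  nilpotentGraph_odd_degree_of_even_nilpotentizer_general h2
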